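/- Let α be a real number and set Q₁ = sinh(2α) − cosh(2α) and Q₂ = (sinh²(2α) − sinh(2α)·cosh(2α))/cosh(2α). Then Q₁ < 0 and Q₁² − Q₂² + 4 > 0; consequently every complex root of the quadratic λ² − 2Q₁λ + (Q₁² − Q₂² + 4) has negative real part, and hence the 4×4 matrix A = [[Q₂+Q₁, 0, 2, 0],[2Q₁, Q₁−Q₂, 0, −2],[−2, 0, Q₁−Q₂, 0],[0, 2, 2Q₁, Q₂+Q₁]], whose characteristic polynomial is (λ² − 2Q₁λ + Q₁² − Q₂² + 4)², is Hurwitz. -/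

import Mathlib

/-!
Q₁ = −e^{−2α} < 0 and Q₂ = Q₁ tanh 2α, so Q₂² < Q₁² and the quadratic
λ² − 2Q₁λ + (Q₁² − Q₂² + 4) has positive coefficients b, c. For a root z = x + iy of
z² + bz + c the imaginary part gives y(2x + b) = 0: either z is real, and then negative since
every term is positive for x ≥ 0, or x = −b/2 < 0. Cofactor expansion shows that the
characteristic polynomial of A is the square of this quadratic.
-/

open Matrix

noncomputable section

def Q1 (α : ℝ) : ℝ := Real.sinh (2*α) - Real.cosh (2*α)

def Q2 (α : ℝ) : ℝ :=
  (Real.sinh (2*α)^2 - Real.sinh (2*α) * Real.cosh (2*α)) / Real.cosh (2*α)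

/-- The drift matrix A of the first cascade realization. -/
def driftA (α : ℝ) : Matrix (Fin 4) (Fin 4) ℝ :=
  !![Q2 α + Q1 α, 0, 2, 0;
     2 * Q1 α, Q1 α - Q2 α, 0, -2;
     -2, 0, Q1 α - Q2 α, 0;
     0, 2, 2 * Q1 α, Q2 α + Q1 α]

/-- A real square matrix is Hurwitz if every eigenvalue (complex root of its
characteristic polynomial) has negative real part. -/
def IsHurwitz {m : Type*} [Fintype m] [DecidableEq m] (A : Matrix m m ℝ) : Prop :=
  ∀ z : ℂ, (A.map Complex.ofReal).charpoly.IsRoot z → z.re < 0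

open Polynomial

theorem Complex.re_neg_of_sq_add_mul_add_eq_zero {b c : ℝ} (hb : 0 < b) (hc : 0 < c) {z : ℂ}
    (hz : z ^ 2 + b * z + c = 0) : z.re < 0 := by
  have hre : z.re ^ 2 - z.im ^ 2 + b * z.re + c = 0 := by
    simpa [sq] using congrArg Complex.re hz
  have him : z.im * (2 * z.re + b) = 0 := by
    have := congrArg Complex.im hz
    simp only [sq, mul_im, add_im, ofReal_re, ofReal_im, zero_im] at this
    linear_combination this
  rcases mul_eq_zero.mp him with hreal | hre_eq
  · rw [hreal] at hre
    nlinarith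
  · linarith

theorem isHurwitz_of_charpoly_eq_pow {m : Type*} [Fintype m] [DecidableEq m]
    {A : Matrix m m ℝ} {b c : ℝ} (hb : 0 < b) (hc : 0 < c) {n : ℕ}
    (hA : A.charpoly = (X ^ 2 + C b * X + C c) ^ n) : IsHurwitz A := by
  intro z hz
  change (A.map Complex.ofRealHom).charpoly.IsRoot z at hz
  rw [charpoly_map, hA, IsRoot, eval_map, eval₂_pow] at hz
  exact Complex.re_neg_of_sq_add_mul_add_eq_zero hb hc (by simpa using eq_zero_of_pow_eq_zero hz)

theorem Q1_eq_neg_exp (α : ℝ) : Q1 α = -Real.exp (-(2 * α)) := by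
  rw [← Real.cosh_sub_sinh, Q1, neg_sub]

theorem Q1_neg (α : ℝ) : Q1 α < 0 := by
  rw [Q1_eq_neg_exp]
  exact neg_neg_of_pos (Real.exp_pos _)

theorem Q2_eq_Q1_mul_tanh (α : ℝ) : Q2 α = Q1 α * Real.tanh (2 * α) := by
  rw [Q2, Q1, Real.tanh_eq_sinh_div_cosh]
  ring

theorem sq_Q2_lt_sq_Q1 (α : ℝ) : Q2 α ^ 2 < Q1 α ^ 2 := by
  rw [Q2_eq_Q1_mul_tanh, mul_pow]
  exact mul_lt_of_lt_one_right (sq_pos_of_neg (Q1_neg α)) (Real.tanh_sq_lt_one _)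

def cascadeDrift {R : Type*} [Ring R] (q₁ q₂ : R) : Matrix (Fin 4) (Fin 4) R :=
  !![q₂ + q₁, 0, 2, 0;
     2 * q₁, q₁ - q₂, 0, -2;
     -2, 0, q₁ - q₂, 0;
     0, 2, 2 * q₁, q₂ + q₁]

theorem charpoly_cascadeDrift {R : Type*} [CommRing R] (q₁ q₂ : R) :
    (cascadeDrift q₁ q₂).charpoly
      = (X ^ 2 + C (-2 * q₁) * X + C (q₁ ^ 2 - q₂ ^ 2 + 4)) ^ 2 := by
  simp [cascadeDrift, charpoly, charmatrix, det_succ_row_zero, Fin.sum_univ_succ,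
    Fin.succAbove, C_ofNat]
  ring

theorem driftA_eq_cascadeDrift (α : ℝ) : driftA α = cascadeDrift (Q1 α) (Q2 α) := rfl

theorem driftA_hurwitz (α : ℝ) :
    Q1 α < 0 ∧
    Q1 α ^ 2 - Q2 α ^ 2 + 4 > 0 ∧
    (∀ z : ℂ, z ^ 2 - 2 * (Q1 α : ℂ) * z + ((Q1 α : ℂ) ^ 2 - (Q2 α : ℂ) ^ 2 + 4) = 0 →
      z.re < 0) ∧
    IsHurwitz (driftA α) := by
  have hb : 0 < -2 * Q1 α := by linarith [Q1_neg α]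
  have hc : Q1 α ^ 2 - Q2 α ^ 2 + 4 > 0 := by linarith [sq_Q2_lt_sq_Q1 α]
  refine ⟨Q1_neg α, hc, fun z hz => ?_, ?_⟩
  · exact Complex.re_neg_of_sq_add_mul_add_eq_zero hb hc (by push_cast; linear_combination hz)
  · rw [driftA_eq_cascadeDrift]
    exact isHurwitz_of_charpoly_eq_pow hb hc (charpoly_cascadeDrift _ _)
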